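/- arXiv:1712.08284 — 5 statements merged into one kernel-verified Lean document; each statement's English description precedes it below -/
import Mathlib

section
/- Two sequences of cardinals (λ_n)_n and (μ_n)_n satisfy (λ_n) ≈ (μ_n) if and only if: (1) (λ_n) is eventually zero iff (μ_n) is; (2) for every infinite cardinal κ, (λ_n) is eventually < κ iff (μ_n) is; and (3) for each M ∈ ℕ there exists M' with Σ_{n≤M} λ_n ≤ Σ_{n≤M'} μ_n and Σ_{n≤M} μ_n ≤ Σ_{n≤M'} λ_n. -/
/-!
Call a bijection `Σ λ ≃ Σ μ` controlled when it moves levels boundedly in both directions.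
Schröder–Bernstein turns two controlled injections into a controlled bijection, since the
bijection it produces agrees at every point with one of the two injections.

To build a controlled injection `Σ λ → Σ μ`, condition (3) places the levels `≤ N` into an initial
segment of `Σ μ`, and each later level `λ_n` is placed into its own finite block of `μ`'s past
the previous one. That every late `λ_n` fits into a finite block beyond any given point follows
from (1) and (2): let `τ` be the eventual value of the decreasing tail suprema
`sup_g ∑_{b ≤ j < g} μ_j`; apply (2) with `κ = τ` if `μ` is eventually `< τ`, and with `κ = τ⁺`
otherwise.

Conversely, a controlled bijection maps initial segments into initial segments, and maps a
far-out fibre `μ_n` into finitely many levels of `λ`, all of them in the region where `λ < κ`.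
-/

def CardSeqEquiv (l m : ℕ → Cardinal) : Prop :=
  ∃ f : (Σ n : ℕ, Quotient.out (l n)) ≃ (Σ n : ℕ, Quotient.out (m n)),
    ∀ M : ℕ, ∃ M' : ℕ,
      (∀ p : Σ n : ℕ, Quotient.out (l n), p.1 ≤ M → (f p).1 ≤ M') ∧
      (∀ q : Σ n : ℕ, Quotient.out (m n), q.1 ≤ M → (f.symm q).1 ≤ M')

open Cardinal Filter Finset Function

universe u

def LevelClose (B : ℕ → ℕ) (i j : ℕ) : Prop :=
  ∀ M, (i ≤ M → j ≤ B M) ∧ (j ≤ M → i ≤ B M)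

namespace LevelClose

variable {B B' : ℕ → ℕ} {i j : ℕ}

theorem symm (h : LevelClose B i j) : LevelClose B j i :=
  fun M => (h M).symm

theorem mono (h : LevelClose B i j) (hB : B ≤ B') : LevelClose B' i j :=
  fun M => ⟨fun hi => ((h M).1 hi).trans (hB M), fun hj => ((h M).2 hj).trans (hB M)⟩

end LevelClose

theorem levelClose_of_mem_Ico {c : ℕ → ℕ} (hc : StrictMono c) {N i j : ℕ}
    (h : j ∈ Ico (c (i - N)) (c (i - N + 1))) : LevelClose (fun M => c (M + 1) + N + M) i j := by
  rw [Finset.mem_Ico] at h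
  have hid : i - N ≤ c (i - N) := hc.id_le _
  refine fun M => ⟨fun hi => ?_, fun hj => ?_⟩ <;> dsimp only
  · have := hc.monotone (show i - N + 1 ≤ M + 1 by omega)
    omega
  · omega

theorem mk_sigma_fst_mem {α : ℕ → Type u} (s : Finset ℕ) :
    #{x : Σ n, α n | x.1 ∈ s} = ∑ n ∈ s, #(α n) := by
  classical
  induction s using Finset.induction_on with
  | empty => simp
  | insert a s ha ih =>
    have hdisj : Disjoint {x : Σ n, α n | x.1 = a} {x | x.1 ∈ s} :=
      Set.disjoint_left.2 fun x hxa hxs => ha (hxa ▸ hxs)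
    have hfiber : #{x : Σ n, α n | x.1 = a} = #(α a) := mk_congr (Equiv.sigmaSubtype a)
    have hunion : {x : Σ n, α n | x.1 ∈ insert a s} = {x | x.1 = a} ∪ {x | x.1 ∈ s} := by
      ext x
      simp
    rw [sum_insert ha, ← ih, ← hfiber, ← mk_union_of_disjoint hdisj, hunion]

section

variable {α β : ℕ → Type u} {B : ℕ → ℕ}

theorem sum_range_le_of_levelClose {u : (Σ n, α n) → Σ n, β n} (hu : Injective u)
    (hB : ∀ x, LevelClose B x.1 (u x).1) (M : ℕ) :
    ∑ n ∈ range (M + 1), #(α n) ≤ ∑ n ∈ range (B M + 1), #(β n) := by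
  have hmaps : Set.MapsTo u {x | x.1 ∈ range (M + 1)} {y | y.1 ∈ range (B M + 1)} :=
    fun x hx => by simpa [Nat.lt_succ_iff] using (hB x M).1 (by simpa [Nat.lt_succ_iff] using hx)
  rw [← mk_sigma_fst_mem, ← mk_sigma_fst_mem]
  exact mk_le_of_injective (hmaps.restrict_inj.2 hu.injOn)

theorem eventually_lt_of_levelClose {v : (Σ n, β n) → Σ n, α n} (hv : Injective v)
    (hB : ∀ y, LevelClose B y.1 (v y).1) {κ : Cardinal.{u}}
    (hκ : ∀ a b, a < κ → b < κ → a + b < κ) (h : ∀ᶠ n in atTop, #(α n) < κ) :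
    ∀ᶠ n in atTop, #(β n) < κ := by
  obtain ⟨N, hN⟩ := eventually_atTop.1 h
  have hκ₀ : 0 < κ := zero_le.trans_lt (hN N le_rfl)
  filter_upwards [eventually_gt_atTop (B N)] with n hn
  have hmem : ∀ b : β n, v ⟨n, b⟩ ∈ {x : Σ n, α n | x.1 ∈ Ioc N (B n)} := fun b => by
    have hlow : (v ⟨n, b⟩).1 ≤ N → n ≤ B N := (hB ⟨n, b⟩ N).2
    exact Finset.mem_Ioc.2 ⟨by omega, (hB ⟨n, b⟩ n).1 le_rfl⟩
  calc #(β n) ≤ #{x : Σ n, α n | x.1 ∈ Ioc N (B n)} :=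
        mk_le_of_injective ((Set.injective_codRestrict hmem).2 (hv.comp sigma_mk_injective))
    _ = ∑ j ∈ Ioc N (B n), #(α j) := mk_sigma_fst_mem _
    _ < κ := sum_induction _ (· < κ) hκ hκ₀ fun j hj => hN j (Finset.mem_Ioc.1 hj).1.le

end

section TailSup

variable {m : ℕ → Cardinal.{u}}

noncomputable def tailSup (m : ℕ → Cardinal.{u}) (i : ℕ) : Cardinal.{u} :=
  ⨆ j, ∑ k ∈ Ico i j, m k

theorem sum_Ico_le_tailSup (i j : ℕ) : ∑ k ∈ Ico i j, m k ≤ tailSup m i :=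
  le_ciSup bddAbove_of_small j

theorem le_tailSup {i k : ℕ} (h : i ≤ k) : m k ≤ tailSup m i :=
  (single_le_sum (fun _ _ => zero_le) (Finset.mem_Ico.2 ⟨h, k.lt_succ_self⟩)).trans
    (sum_Ico_le_tailSup i (k + 1))

theorem exists_lt_sum_Ico_of_lt_tailSup {c : Cardinal.{u}} {i : ℕ} (h : c < tailSup m i) :
    ∃ j, c < ∑ k ∈ Ico i j, m k :=
  (lt_ciSup_iff bddAbove_of_small).1 h

theorem exists_natCast_le_sum_Ico (hm : ∃ᶠ k in atTop, m k ≠ 0) (n i : ℕ) :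
    ∃ j, (n : Cardinal) ≤ ∑ k ∈ Ico i j, m k := by
  induction n generalizing i with
  | zero => exact ⟨i, by simp⟩
  | succ n ih =>
    obtain ⟨k, hik, hk⟩ := frequently_atTop.1 hm i
    obtain ⟨j, hj⟩ := ih (k + 1)
    refine ⟨max j (k + 1), ?_⟩
    calc ((n + 1 : ℕ) : Cardinal) = 1 + n := by push_cast; ring
      _ ≤ m k + ∑ l ∈ Ico (k + 1) (max j (k + 1)), m l :=
        add_le_add (Cardinal.one_le_iff_ne_zero.2 hk)
          (hj.trans (sum_le_sum_of_subset (Ico_subset_Ico_right (le_max_left _ _))))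
      _ = ∑ l ∈ Ico k (max j (k + 1)), m l := (sum_eq_sum_Ico_succ_bot (by omega) _).symm
      _ ≤ ∑ l ∈ Ico i (max j (k + 1)), m l := sum_le_sum_of_subset (Ico_subset_Ico_left hik)

theorem aleph0_le_tailSup (hm : ∃ᶠ k in atTop, m k ≠ 0) (i : ℕ) : ℵ₀ ≤ tailSup m i :=
  aleph0_le.2 fun n =>
    let ⟨j, hj⟩ := exists_natCast_le_sum_Ico hm n i
    hj.trans (sum_Ico_le_tailSup i j)

end TailSup

theorem eventually_le_sum_Ico {l m : ℕ → Cardinal.{u}}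
    (hzero : (∀ᶠ n in atTop, m n = 0) → ∀ᶠ n in atTop, l n = 0)
    (hlt : ∀ κ, ℵ₀ ≤ κ → (∀ᶠ n in atTop, m n < κ) → ∀ᶠ n in atTop, l n < κ) :
    ∀ᶠ n in atTop, ∀ i, ∃ j, l n ≤ ∑ k ∈ Ico i j, m k := by
  by_cases hm : ∀ᶠ n in atTop, m n = 0
  · filter_upwards [hzero hm] with n hn i using ⟨i, by simp [hn]⟩
  rw [not_eventually] at hm
  set τ := ⨅ i, tailSup m i
  obtain ⟨i₀, hi₀⟩ : τ ∈ Set.range (tailSup m) := ciInf_mem _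
  have hτ_le (i : ℕ) : τ ≤ tailSup m i := ciInf_le (OrderBot.bddBelow _) i
  have hτ : ℵ₀ ≤ τ := hi₀ ▸ aleph0_le_tailSup hm i₀
  by_cases hsmall : ∀ᶠ k in atTop, m k < τ
  · filter_upwards [hlt τ hτ hsmall] with n hn i
    obtain ⟨j, hj⟩ := exists_lt_sum_Ico_of_lt_tailSup (hn.trans_le (hτ_le i))
    exact ⟨j, hj.le⟩
  · have hle : ∀ᶠ k in atTop, m k < Order.succ τ := by
      filter_upwards [eventually_ge_atTop i₀] with k hk
      exact Order.lt_succ_iff.2 (hi₀ ▸ le_tailSup hk)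
    filter_upwards [hlt _ (hτ.trans (Order.le_succ τ)) hle] with n hn i
    obtain ⟨k, hik, hk⟩ := frequently_atTop.1 (not_eventually.1 hsmall) i
    exact ⟨k + 1, (Order.lt_succ_iff.1 hn).trans ((not_lt.1 hk).trans
      (single_le_sum (fun _ _ => zero_le) (Finset.mem_Ico.2 ⟨hik, k.lt_succ_self⟩)))⟩

theorem exists_strictMono_le_sum_Ico {D d : ℕ → Cardinal.{u}}
    (h : ∀ k i, ∃ j, D k ≤ ∑ n ∈ Ico i j, d n) (c₀ : ℕ) :
    ∃ c : ℕ → ℕ, StrictMono c ∧ c 0 = c₀ ∧ ∀ k, D k ≤ ∑ n ∈ Ico (c k) (c (k + 1)), d n := by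
  choose g hg using h
  let c : ℕ → ℕ := fun k => Nat.rec c₀ (fun k ck => max (ck + 1) (g k ck)) k
  have hc (k : ℕ) : c (k + 1) = max (c k + 1) (g k (c k)) := rfl
  refine ⟨c, strictMono_nat_of_lt_succ fun k => by grind, rfl, fun k => (hg k (c k)).trans ?_⟩
  exact sum_le_sum_of_subset (Ico_subset_Ico_right (by grind))

theorem exists_injective_forall_mem {X Y : Type u} {ι : Type*} (p : X → ι) (T : ι → Set Y)
    (hT : Pairwise (Disjoint on T)) (h : ∀ k, #{x // p x = k} ≤ #(T k)) :
    ∃ u : X → Y, Injective u ∧ ∀ x, u x ∈ T (p x) := by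
  have φ (k : ι) : {x // p x = k} ↪ T k := ((le_def _ _).1 (h k)).some
  let u : X → Y :=
    Subtype.val ∘ Set.sigmaToiUnion T ∘ Sigma.map id (fun k => φ k) ∘ (Equiv.sigmaFiberEquiv p).symm
  refine ⟨u, ?_, fun x => (φ (p x) ⟨x, rfl⟩).2⟩
  exact Subtype.val_injective.comp <| (Set.sigmaToiUnion_injective T hT).comp <|
    (injective_id.sigma_map fun k => (φ k).injective).comp (Equiv.injective _)

theorem exists_injective_levelClose {α β : ℕ → Type u}
    (hfit : ∀ᶠ n in atTop, ∀ i, ∃ j, #(α n) ≤ ∑ k ∈ Ico i j, #(β k))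
    (hpre : ∀ M, ∃ M', ∑ n ∈ range (M + 1), #(α n) ≤ ∑ n ∈ range (M' + 1), #(β n)) :
    ∃ u : (Σ n, α n) → Σ n, β n, Injective u ∧ ∃ B, ∀ x, LevelClose B x.1 (u x).1 := by
  obtain ⟨N, hN⟩ := eventually_atTop.1 hfit
  obtain ⟨M', hM'⟩ := hpre N
  obtain ⟨c, hc, hc₀, hcD⟩ := exists_strictMono_le_sum_Ico
    (D := fun k => #(α (N + k + 1))) (fun k => hN _ (by omega)) (M' + 1)
  -- level `N + k + 1` is sent to the block `[c k, c (k + 1))`, the levels `≤ N` to `[0, c 0)`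
  let c' : ℕ → ℕ := fun k => if k = 0 then 0 else c (k - 1)
  have hc' : StrictMono c' := strictMono_nat_of_lt_succ fun k => by
    rcases k with _ | k
    · simp [c', hc₀]
    · simpa [c'] using hc k.lt_succ_self
  have hfibre (k : ℕ) (s : Finset ℕ) (hs : ∀ n, n - N = k ↔ n ∈ s) :
      #{x : Σ n, α n // x.1 - N = k} = ∑ n ∈ s, #(α n) := by
    rw [← mk_sigma_fst_mem]
    exact mk_congr (Equiv.subtypeEquivRight fun x => hs x.1)
  obtain ⟨u, hu, hmem⟩ := exists_injective_forall_mem (fun x : Σ n, α n => x.1 - N)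
    (fun k => {y : Σ n, β n | y.1 ∈ Ico (c' k) (c' (k + 1))})
    (fun k k' hkk' => by
      have := (hc'.monotone.pairwise_disjoint_on_Ico_succ hkk').preimage (Sigma.fst (β := β))
      simp only [Order.succ_eq_add_one, ← coe_Ico] at this
      exact this)
    (fun k => by
      rw [mk_sigma_fst_mem]
      rcases k with _ | k
      · rw [hfibre 0 (range (N + 1)) (fun n => by simp; omega)]
        simpa [c', hc₀, Nat.Ico_zero_eq_range] using hM'
      · rw [hfibre (k + 1) {N + k + 1} (fun n => by simp; omega), sum_singleton]
        simpa [c'] using hcD k)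
  exact ⟨u, hu, _, fun x => levelClose_of_mem_Ico hc' (hmem x)⟩

theorem exists_equiv_levelClose {α β : ℕ → Type u} {u : (Σ n, α n) → Σ n, β n}
    {v : (Σ n, β n) → Σ n, α n} (hu : Injective u) (hv : Injective v) {Bu Bv : ℕ → ℕ}
    (hBu : ∀ x, LevelClose Bu x.1 (u x).1) (hBv : ∀ y, LevelClose Bv y.1 (v y).1) :
    ∃ e : (Σ n, α n) ≃ Σ n, β n, ∀ x, LevelClose (Bu ⊔ Bv) x.1 (e x).1 := by
  obtain ⟨e, he, hR⟩ := Embedding.schroeder_bernstein_of_rel hu hv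
    (fun x y => LevelClose (Bu ⊔ Bv) x.1 y.1) (fun x => (hBu x).mono le_sup_left)
    (fun y => ((hBv y).mono le_sup_right).symm)
  exact ⟨Equiv.ofBijective e he, hR⟩

theorem exists_equiv_levelClose_iff {α β : ℕ → Type u} :
    (∃ (e : (Σ n, α n) ≃ Σ n, β n) (B : ℕ → ℕ), ∀ x, LevelClose B x.1 (e x).1) ↔
      ((∀ᶠ n in atTop, #(α n) = 0) ↔ ∀ᶠ n in atTop, #(β n) = 0) ∧
      (∀ κ, ℵ₀ ≤ κ → ((∀ᶠ n in atTop, #(α n) < κ) ↔ ∀ᶠ n in atTop, #(β n) < κ)) ∧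
      ∀ M, ∃ M', ∑ n ∈ range (M + 1), #(α n) ≤ ∑ n ∈ range (M' + 1), #(β n) ∧
        ∑ n ∈ range (M + 1), #(β n) ≤ ∑ n ∈ range (M' + 1), #(α n) := by
  have hadd_lt_one : ∀ a b : Cardinal.{u}, a < 1 → b < 1 → a + b < 1 := by
    simp +contextual [Cardinal.lt_one_iff]
  have hadd_lt {κ : Cardinal.{u}} (hκ : ℵ₀ ≤ κ) (a b : Cardinal.{u}) : a < κ → b < κ → a + b < κ :=
    add_lt_of_lt hκ
  constructor
  · rintro ⟨e, B, he⟩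
    have he' (y : Σ n, β n) : LevelClose B y.1 (e.symm y).1 := by
      simpa using (he (e.symm y)).symm
    simp only [← Cardinal.lt_one_iff]
    exact ⟨⟨eventually_lt_of_levelClose e.symm.injective he' hadd_lt_one,
        eventually_lt_of_levelClose e.injective he hadd_lt_one⟩,
      fun κ hκ => ⟨eventually_lt_of_levelClose e.symm.injective he' (hadd_lt hκ),
        eventually_lt_of_levelClose e.injective he (hadd_lt hκ)⟩,
      fun M => ⟨B M, sum_range_le_of_levelClose e.injective he M,
        sum_range_le_of_levelClose e.symm.injective he' M⟩⟩
  · rintro ⟨hzero, hlt, hsum⟩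
    obtain ⟨u, hu, Bu, hBu⟩ := exists_injective_levelClose
      (eventually_le_sum_Ico hzero.2 fun κ hκ => (hlt κ hκ).2)
      fun M => (hsum M).imp fun _ => And.left
    obtain ⟨v, hv, Bv, hBv⟩ := exists_injective_levelClose
      (eventually_le_sum_Ico hzero.1 fun κ hκ => (hlt κ hκ).1)
      fun M => (hsum M).imp fun _ => And.right
    obtain ⟨e, he⟩ := exists_equiv_levelClose hu hv hBu hBv
    exact ⟨e, _, he⟩

theorem cardSeqEquiv_iff_exists_levelClose {l m : ℕ → Cardinal.{u}} :
    CardSeqEquiv l m ↔ ∃ (e : (Σ n, (l n).out) ≃ Σ n, (m n).out) (B : ℕ → ℕ),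
      ∀ x, LevelClose B x.1 (e x).1 := by
  refine ⟨fun ⟨e, he⟩ => ?_, fun ⟨e, B, he⟩ => ⟨e, fun M => ⟨B M, ?_, ?_⟩⟩⟩
  · choose B hB using he
    refine ⟨e, B, fun x M => ⟨(hB M).1 x, fun hx => ?_⟩⟩
    simpa using (hB M).2 (e x) hx
  · exact fun x hx => (he x M).1 hx
  · exact fun y hy => (he (e.symm y) M).2 (by simpa using hy)

theorem cardSeqEquiv_iff (l m : ℕ → Cardinal) :
    CardSeqEquiv l m ↔
      ((∃ N : ℕ, ∀ n ≥ N, l n = 0) ↔ (∃ N : ℕ, ∀ n ≥ N, m n = 0)) ∧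
      (∀ κ : Cardinal, Cardinal.aleph0 ≤ κ →
        ((∃ N : ℕ, ∀ n ≥ N, l n < κ) ↔ (∃ N : ℕ, ∀ n ≥ N, m n < κ))) ∧
      (∀ M : ℕ, ∃ M' : ℕ,
        (∑ n ∈ Finset.range (M + 1), l n) ≤ (∑ n ∈ Finset.range (M' + 1), m n) ∧
        (∑ n ∈ Finset.range (M + 1), m n) ≤ (∑ n ∈ Finset.range (M' + 1), l n)) := by
  simpa only [cardSeqEquiv_iff_exists_levelClose, eventually_atTop, mk_out] using
    exists_equiv_levelClose_iff (α := fun n => (l n).out) (β := fun n => (m n).out)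
end

section
/- If (λ_n)_n and (μ_n)_n are sequences of cardinals, all λ_n and μ_n are infinite cardinals, λ_1 ≤ λ_2 ≤ λ_3 ≤ ⋯ and μ_1 ≤ μ_2 ≤ μ_3 ≤ ⋯, and there is a common infinite cardinal κ with κ = sup_n λ_n = sup_n μ_n, with λ_n, μ_n < κ for all n ≥ 1, and λ_0 = μ_0, then (λ_n) ≈ (μ_n). -/
open Cardinal

universe u

namespace CSEAux

/-- Partition a subtype according to an iff with a disjoint disjunction. -/
noncomputable def subtypePartition {Z : Type*} {P Q R : Z → Prop}
    (h : ∀ z, P z ↔ (Q z ∨ R z)) (hd : ∀ z, Q z → R z → False) :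
    {z : Z // P z} ≃ {z : Z // Q z} ⊕ {z : Z // R z} := by
  classical
  exact
  { toFun := fun z => if hq : Q z.1 then .inl ⟨z.1, hq⟩ else
      .inr ⟨z.1, ((h z.1).mp z.2).resolve_left hq⟩
    invFun := fun w => match w with
      | .inl z => ⟨z.1, (h z.1).mpr (.inl z.2)⟩
      | .inr z => ⟨z.1, (h z.1).mpr (.inr z.2)⟩
    left_inv := by
      rintro ⟨z, hz⟩
      by_cases hq : Q z <;> simp [hq]
    right_inv := by
      rintro (⟨z, hz⟩ | ⟨z, hz⟩)
      · simp [hz]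
      · have : ¬ Q z := fun hq => hd z hq hz
        simp [this] }

def sigmaSubtypeEquiv {T : ℕ → Type u} (P : ℕ → Prop) :
    {x : Σ n, T n // P x.1} ≃ Σ n : Subtype P, T n.1 where
  toFun x := ⟨⟨x.1.1, x.2⟩, x.1.2⟩
  invFun y := ⟨⟨y.1.1, y.2⟩, y.1.2⟩
  left_inv := by rintro ⟨⟨n, t⟩, h⟩; rfl
  right_inv := by rintro ⟨⟨n, h⟩, t⟩; rfl

def sigmaFiberZero {T : ℕ → Type u} : {x : Σ n, T n // x.1 = 0} ≃ T 0 where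
  toFun x := x.2 ▸ x.1.2
  invFun t := ⟨⟨0, t⟩, rfl⟩
  left_inv := by rintro ⟨⟨n, t⟩, h⟩; dsimp at h; subst h; rfl
  right_inv t := rfl

def sumSubtypeLeft {U V : Type u} : {w : U ⊕ V // w.isLeft} ≃ U where
  toFun w := w.1.getLeft w.2
  invFun u := ⟨.inl u, rfl⟩
  left_inv := by
    rintro ⟨(u | v), h⟩
    · rfl
    · cases h
  right_inv u := rfl

def sumSubtypeRight {U V : Type u} : {w : U ⊕ V // w.isRight} ≃ V where
  toFun w := w.1.getRight w.2
  invFun v := ⟨.inr v, rfl⟩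
  left_inv := by
    rintro ⟨(u | v), h⟩
    · cases h
    · rfl
  right_inv v := rfl

lemma findGreatest_le_iff (a : ℕ → ℕ) (ha : StrictMono a) (ha0 : a 0 = 0) (n j : ℕ) :
    Nat.findGreatest (fun k => a k < n) n ≤ j ↔ n ≤ a (j + 1) := by
  classical
  set K := Nat.findGreatest (fun k => a k < n) n with hK
  constructor
  · intro h
    have h2 : n ≤ a (K + 1) := by
      by_contra hc
      push_neg at hc
      have h3' : K + 1 ≤ a (K + 1) := ha.le_apply
      have h3 : K + 1 ≤ n := by omega
      have h4 : K + 1 ≤ K := hK ▸ Nat.le_findGreatest h3 hc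
      omega
    exact h2.trans (ha.monotone (Nat.succ_le_succ h))
  · intro h
    by_contra hc
    push_neg at hc
    rcases Nat.eq_zero_or_pos n with hn | hn
    · have : K ≤ n := Nat.findGreatest_le n
      omega
    · have hp' := Nat.findGreatest_spec (P := fun k => a k < n) (m := 0) (Nat.zero_le n)
        (by simpa [ha0] using hn)
      have hp : a K < n := by rwa [← hK] at hp'
      have : a (j + 1) ≤ a K := ha.monotone hc
      omega

lemma mk_out' (c : Cardinal.{u}) : #(Quotient.out c) = c := Cardinal.mk_out c

lemma mk_slab (l : ℕ → Cardinal.{u}) (hinf : ∀ n, ℵ₀ ≤ l n)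
    (hmono : ∀ i j, 1 ≤ i → i ≤ j → l i ≤ l j) (u v : ℕ) (hu : 1 ≤ u) (huv : u ≤ v) :
    #{x : Σ n, Quotient.out (l n) // u ≤ x.1 ∧ x.1 ≤ v} = l v := by
  rw [Cardinal.mk_congr (sigmaSubtypeEquiv (fun n => u ≤ n ∧ n ≤ v)), Cardinal.mk_sigma]
  simp only [mk_out']
  apply le_antisymm
  · calc Cardinal.sum (fun i : {n // u ≤ n ∧ n ≤ v} => l i.1)
        ≤ Cardinal.sum (fun _ : {n // u ≤ n ∧ n ≤ v} => l v) :=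
          Cardinal.sum_le_sum _ _ (fun i => hmono i.1 v (le_trans hu i.2.1) i.2.2)
      _ = Cardinal.lift.{u} #{n // u ≤ n ∧ n ≤ v} * Cardinal.lift.{0} (l v) :=
          Cardinal.sum_const _ _
      _ ≤ l v * l v := by
          refine mul_le_mul' ?_ (by simp)
          refine le_trans ?_ (hinf v)
          simpa using Cardinal.lift_le.{u}.mpr (Cardinal.mk_le_aleph0 (α := {n // u ≤ n ∧ n ≤ v}))
      _ = l v := Cardinal.mul_eq_self (hinf v)
  · exact Cardinal.le_sum (fun n : {n // u ≤ n ∧ n ≤ v} => l n.1) ⟨v, huv, le_rfl⟩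

lemma mk_slab0 (l : ℕ → Cardinal.{u}) (hinf : ∀ n, ℵ₀ ≤ l n)
    (hmono : ∀ i j, 1 ≤ i → i ≤ j → l i ≤ l j) (v : ℕ) (hv : 1 ≤ v) :
    #{x : Σ n, Quotient.out (l n) // x.1 ≤ v} = l 0 + l v := by
  rw [Cardinal.mk_congr (subtypePartition (Q := fun x : Σ n, Quotient.out (l n) => x.1 = 0)
    (R := fun x : Σ n, Quotient.out (l n) => 1 ≤ x.1 ∧ x.1 ≤ v)
    (fun z => by omega) (fun z h1 h2 => by omega))]
  rw [Cardinal.mk_sum, Cardinal.lift_id, Cardinal.lift_id,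
    Cardinal.mk_congr (sigmaFiberZero (T := fun n => Quotient.out (l n))), mk_out',
    mk_slab l hinf hmono 1 v le_rfl hv]

def sumSubtypeLeftFalse {U V : Type u} : {w : U ⊕ V // w.isLeft = false} ≃ V where
  toFun w := w.1.getRight (by
    rcases w with ⟨(u | v), h⟩
    · simp at h
    · rfl)
  invFun v := ⟨.inr v, rfl⟩
  left_inv := by
    rintro ⟨(u | v), h⟩
    · simp at h
    · rfl
  right_inv v := rfl

lemma mk_slab_lt (l : ℕ → Cardinal.{u}) (hinf : ∀ n, ℵ₀ ≤ l n)
    (hmono : ∀ i j, 1 ≤ i → i ≤ j → l i ≤ l j) (u v : ℕ) (huv : u < v) :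
    #{x : Σ n, Quotient.out (l n) // u < x.1 ∧ x.1 ≤ v} = l v := by
  rw [Cardinal.mk_congr (Equiv.subtypeEquivRight
    (q := fun x : Σ n, Quotient.out (l n) => u + 1 ≤ x.1 ∧ x.1 ≤ v) (fun x => by omega))]
  exact mk_slab l hinf hmono (u + 1) v (by omega) huv

end CSEAux

open CSEAux in
theorem cardSeqEquiv_of_sup' (l m : ℕ → Cardinal) (κ : Cardinal)
    (hκ : Cardinal.aleph0 ≤ κ)
    (hlinf : ∀ n, Cardinal.aleph0 ≤ l n) (hminf : ∀ n, Cardinal.aleph0 ≤ m n)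
    (hlmono : ∀ n : ℕ, 1 ≤ n → l n ≤ l (n + 1))
    (hmmono : ∀ n : ℕ, 1 ≤ n → m n ≤ m (n + 1))
    (hlsup : κ = ⨆ n : ℕ, l (n + 1)) (hmsup : κ = ⨆ n : ℕ, m (n + 1))
    (hllt : ∀ n : ℕ, 1 ≤ n → l n < κ) (hmlt : ∀ n : ℕ, 1 ≤ n → m n < κ)
    (h0 : l 0 = m 0) :
    ∃ f : (Σ n : ℕ, Quotient.out (l n)) ≃ (Σ n : ℕ, Quotient.out (m n)),
    ∀ M : ℕ, ∃ M' : ℕ,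
      (∀ p : Σ n : ℕ, Quotient.out (l n), p.1 ≤ M → (f p).1 ≤ M') ∧
      (∀ q : Σ n : ℕ, Quotient.out (m n), q.1 ≤ M → (f.symm q).1 ≤ M') := by
  classical
  have hmono_l : ∀ i j, 1 ≤ i → i ≤ j → l i ≤ l j := by
    intro i j hi hij
    induction j, hij using Nat.le_induction with
    | base => exact le_rfl
    | succ j hj ih => exact ih.trans (hlmono j (hi.trans hj))
  have hmono_m : ∀ i j, 1 ≤ i → i ≤ j → m i ≤ m j := by
    intro i j hi hij
    induction j, hij using Nat.le_induction with
    | base => exact le_rfl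
    | succ j hj ih => exact ih.trans (hmmono j (hi.trans hj))
  have hex_l : ∀ c : Cardinal, c < κ → ∀ i : ℕ, ∃ j, i < j ∧ 1 ≤ j ∧ c ≤ l j := by
    intro c hc i
    have hex : ∃ n : ℕ, c < l (n + 1) := by
      by_contra hcon
      push_neg at hcon
      have : κ ≤ c := hlsup ▸ ciSup_le' hcon
      exact absurd hc (not_lt.2 this)
    obtain ⟨n, hn⟩ := hex
    refine ⟨max (i + 1) (n + 1), by omega, by omega, ?_⟩
    exact hn.le.trans (hmono_l (n + 1) _ (by omega) (le_max_right _ _))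
  have hex_m : ∀ c : Cardinal, c < κ → ∀ i : ℕ, ∃ j, i < j ∧ 1 ≤ j ∧ c ≤ m j := by
    intro c hc i
    have hex : ∃ n : ℕ, c < m (n + 1) := by
      by_contra hcon
      push_neg at hcon
      have : κ ≤ c := hmsup ▸ ciSup_le' hcon
      exact absurd hc (not_lt.2 this)
    obtain ⟨n, hn⟩ := hex
    refine ⟨max (i + 1) (n + 1), by omega, by omega, ?_⟩
    exact hn.le.trans (hmono_m (n + 1) _ (by omega) (le_max_right _ _))
  have hFAe : ∀ B A : ℕ, ∃ j, A < j ∧ 1 ≤ j ∧ (1 ≤ B → m B ≤ l j) := by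
    intro B A
    rcases Nat.eq_zero_or_pos B with hB | hB
    · exact ⟨A + 1, by omega, by omega, fun h => absurd (hB ▸ h) (by omega)⟩
    · obtain ⟨j, h1, h2, h3⟩ := hex_l (m B) (hmlt B hB) A
      exact ⟨j, h1, h2, fun _ => h3⟩
  have hFBe : ∀ A B : ℕ, ∃ j, B < j ∧ 1 ≤ j ∧ (1 ≤ A → l A ≤ m j) := by
    intro A B
    rcases Nat.eq_zero_or_pos A with hA | hA
    · exact ⟨B + 1, by omega, by omega, fun h => absurd (hA ▸ h) (by omega)⟩
    · obtain ⟨j, h1, h2, h3⟩ := hex_m (l A) (hllt A hA) B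
      exact ⟨j, h1, h2, fun _ => h3⟩
  choose FA hFA1 hFA2 hFA3 using hFAe
  choose FB hFB1 hFB2 hFB3 using hFBe
  set s : ℕ → ℕ × ℕ := fun k =>
    Nat.rec (motive := fun _ => ℕ × ℕ) (0, 0)
      (fun _ p => (FA p.2 p.1, FB (FA p.2 p.1) p.2)) k with hs
  set a : ℕ → ℕ := fun k => (s k).1 with ha
  set b : ℕ → ℕ := fun k => (s k).2 with hb
  have ha0 : a 0 = 0 := rfl
  have hb0 : b 0 = 0 := rfl
  have haS : ∀ k, a (k + 1) = FA (b k) (a k) := fun k => rfl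
  have hbS : ∀ k, b (k + 1) = FB (a (k + 1)) (b k) := fun k => rfl
  have halt : ∀ k, a k < a (k + 1) := fun k => (haS k) ▸ hFA1 (b k) (a k)
  have hblt : ∀ k, b k < b (k + 1) := fun k => (hbS k) ▸ hFB1 (a (k + 1)) (b k)
  have haSM : StrictMono a := strictMono_nat_of_lt_succ halt
  have hbSM : StrictMono b := strictMono_nat_of_lt_succ hblt
  have hapos : ∀ k, 1 ≤ a (k + 1) := fun k => (haS k) ▸ hFA2 (b k) (a k)
  have hbpos : ∀ k, 1 ≤ b (k + 1) := fun k => (hbS k) ▸ hFB2 (a (k + 1)) (b k)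
  have chain1 : ∀ k, l (a (k + 1)) ≤ m (b (k + 1)) := fun k =>
    (hbS k) ▸ hFB3 (a (k + 1)) (b k) (hapos k)
  have chain2 : ∀ k, m (b (k + 1)) ≤ l (a (k + 2)) := fun k =>
    (haS (k + 1)) ▸ hFA3 (b (k + 1)) (a (k + 1)) (hbpos k)
  set K : ℕ → ℕ := fun n => Nat.findGreatest (fun k => a k < n) n with hKdef
  set Kb : ℕ → ℕ := fun n => Nat.findGreatest (fun k => b k < n) n with hKbdef
  have hKle : ∀ n j, K n ≤ j ↔ n ≤ a (j + 1) := fun n j =>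
    findGreatest_le_iff a haSM ha0 n j
  have hKble : ∀ n j, Kb n ≤ j ↔ n ≤ b (j + 1) := fun n j =>
    findGreatest_le_iff b hbSM hb0 n j
  have hKiff : ∀ n k, K n = k + 1 ↔ (a (k + 1) < n ∧ n ≤ a (k + 2)) := by
    intro n k
    have h1 : K n ≤ k ↔ n ≤ a (k + 1) := hKle n k
    have h2 : K n ≤ k + 1 ↔ n ≤ a (k + 2) := hKle n (k + 1)
    omega
  have hKbiff : ∀ n k, Kb n = k + 1 ↔ (b (k + 1) < n ∧ n ≤ b (k + 2)) := by
    intro n k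
    have h1 : Kb n ≤ k ↔ n ≤ b (k + 1) := hKble n k
    have h2 : Kb n ≤ k + 1 ↔ n ≤ b (k + 2) := hKble n (k + 1)
    omega
  have hK0 : ∀ n, K n = 0 ↔ n ≤ a 1 := by
    intro n
    have h1 : K n ≤ 0 ↔ n ≤ a 1 := hKle n 0
    omega
  have hKb0 : ∀ n, Kb n = 0 ↔ n ≤ b 1 := by
    intro n
    have h1 : Kb n ≤ 0 ↔ n ≤ b 1 := hKble n 0
    omega
  -- splitting equivalences on blocks
  have hEe : ∀ k : ℕ, Nonempty ({x : Σ n : ℕ, Quotient.out (l n) //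
      a (k + 1) < x.1 ∧ x.1 ≤ a (k + 2)} ≃
      (Quotient.out (m (b (k + 1))) ⊕ Quotient.out (l (a (k + 2))))) := by
    intro k
    apply Cardinal.eq.mp
    rw [mk_slab_lt l hlinf hmono_l (a (k + 1)) (a (k + 2)) (halt (k + 1))]
    rw [Cardinal.mk_sum, Cardinal.lift_id, Cardinal.lift_id, mk_out', mk_out',
      Cardinal.add_eq_right (hlinf _) (chain2 k)]
  set E : ∀ k : ℕ, {x : Σ n : ℕ, Quotient.out (l n) //
      a (k + 1) < x.1 ∧ x.1 ≤ a (k + 2)} ≃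
      (Quotient.out (m (b (k + 1))) ⊕ Quotient.out (l (a (k + 2)))) :=
    fun k => (hEe k).some with hE
  set r : (Σ n : ℕ, Quotient.out (l n)) → Bool := fun x =>
    if hx : a (K x.1 - 1 + 1) < x.1 ∧ x.1 ≤ a (K x.1 - 1 + 2) then
      ((E (K x.1 - 1)) ⟨x, hx⟩).isLeft else false with hrdef
  set p : (Σ n : ℕ, Quotient.out (l n)) → ℕ := fun x =>
    if r x then K x.1 - 1 else K x.1 with hpdef
  set q : (Σ n : ℕ, Quotient.out (m n)) → ℕ := fun y => Kb y.1 with hqdef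
  have hr0 : ∀ x, K x.1 = 0 → r x = false := by
    intro x h
    rw [hrdef]
    dsimp only
    rw [dif_neg]
    intro hc
    rw [h] at hc
    have hx1 : x.1 ≤ a 1 := (hK0 x.1).mp h
    simp only [Nat.zero_sub, Nat.zero_add] at hc
    omega
  have hrS : ∀ (x : Σ n : ℕ, Quotient.out (l n)) (k : ℕ), K x.1 = k + 1 →
      ∀ (hx : a (k + 1) < x.1 ∧ x.1 ≤ a (k + 2)), r x = ((E k) ⟨x, hx⟩).isLeft := by
    intro x k h hx
    rw [hrdef]
    dsimp only
    have h1 : K x.1 - 1 = k := by omega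
    rw [h1, dif_pos hx]
  have hrpos : ∀ x, r x = true → 1 ≤ K x.1 := by
    intro x hr
    by_contra hc
    push_neg at hc
    have : K x.1 = 0 := by omega
    rw [hr0 x this] at hr
    exact absurd hr (by simp)
  have hple : ∀ x, p x ≤ K x.1 := by
    intro x
    rw [hpdef]
    dsimp only
    split <;> omega
  have hpge : ∀ x, K x.1 ≤ p x + 1 := by
    intro x
    rw [hpdef]
    dsimp only
    split <;> omega
  -- fiber cardinalities
  have hfib : ∀ j, #{x : Σ n : ℕ, Quotient.out (l n) // p x = j} =
      #{y : Σ n : ℕ, Quotient.out (m n) // q y = j} := by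
    intro j
    have hiff : ∀ x, p x = j ↔ ((K x.1 = j ∧ r x = false) ∨ (K x.1 = j + 1 ∧ r x = true)) := by
      intro x
      rw [hpdef]
      dsimp only
      by_cases hr : r x = true
      · have h1 := hrpos x hr
        simp only [hr]
        simp only [if_true, Bool.true_eq_false, and_false, false_or, and_true]
        omega
      · have hr' : r x = false := by simpa using hr
        simp only [hr']
        simp only [Bool.false_eq_true, if_false, and_true, and_false, or_false]
    have hdisj : ∀ x, (K x.1 = j ∧ r x = false) → (K x.1 = j + 1 ∧ r x = true) → False := by
      rintro x ⟨h1, h2⟩ ⟨h3, h4⟩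
      rw [h2] at h4
      exact absurd h4 (by simp)
    rw [Cardinal.mk_congr (subtypePartition hiff hdisj), Cardinal.mk_sum,
      Cardinal.lift_id, Cardinal.lift_id]
    -- the "carried down" part is equivalent to Quotient.out (m (b (j+1)))
    have hRiff : ∀ x : Σ n : ℕ, Quotient.out (l n),
        (K x.1 = j + 1 ∧ r x = true) ↔
        ∃ hx : a (j + 1) < x.1 ∧ x.1 ≤ a (j + 2), ((E j) ⟨x, hx⟩).isLeft = true := by
      intro x
      constructor
      · rintro ⟨h1, h2⟩
        have hx := (hKiff x.1 j).mp h1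
        exact ⟨hx, by rw [← hrS x j h1 hx]; exact h2⟩
      · rintro ⟨hx, hE2⟩
        have h1 : K x.1 = j + 1 := (hKiff x.1 j).mpr hx
        exact ⟨h1, by rw [hrS x j h1 hx]; exact hE2⟩
    have eqR : {x : Σ n : ℕ, Quotient.out (l n) // K x.1 = j + 1 ∧ r x = true} ≃
        Quotient.out (m (b (j + 1))) :=
      (Equiv.subtypeEquivRight hRiff).trans
        (((Equiv.subtypeSubtypeEquivSubtypeExists _ _).symm.trans
          ((E j).subtypeEquiv (fun w => Iff.rfl))).trans sumSubtypeLeft)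
    rw [Cardinal.mk_congr eqR, mk_out']
    cases j with
    | zero =>
      have eqQ : {x : Σ n : ℕ, Quotient.out (l n) // K x.1 = 0 ∧ r x = false} ≃
          {x : Σ n : ℕ, Quotient.out (l n) // x.1 ≤ a 1} :=
        Equiv.subtypeEquivRight (fun x => by
          constructor
          · rintro ⟨h1, _⟩; exact (hK0 x.1).mp h1
          · intro h; exact ⟨(hK0 x.1).mpr h, hr0 x ((hK0 x.1).mpr h)⟩)
      rw [Cardinal.mk_congr eqQ, mk_slab0 l hlinf hmono_l (a 1) (hapos 0)]
      have eqY : {y : Σ n : ℕ, Quotient.out (m n) // q y = 0} ≃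
          {y : Σ n : ℕ, Quotient.out (m n) // y.1 ≤ b 1} :=
        Equiv.subtypeEquivRight (fun y => by rw [hqdef]; exact hKb0 y.1)
      rw [Cardinal.mk_congr eqY, mk_slab0 m hminf hmono_m (b 1) (hbpos 0)]
      have hc1 : l (a 1) + m (b (0 + 1)) = m (b 1) :=
        Cardinal.add_eq_right (hminf (b 1)) (chain1 0)
      rw [add_assoc, hc1, h0]
    | succ k =>
      have eqQ : {x : Σ n : ℕ, Quotient.out (l n) // K x.1 = k + 1 ∧ r x = false} ≃
          Quotient.out (l (a (k + 2))) := by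
        refine (Equiv.subtypeEquivRight (q := fun x : Σ n : ℕ, Quotient.out (l n) =>
          ∃ hx : a (k + 1) < x.1 ∧ x.1 ≤ a (k + 2), ((E k) ⟨x, hx⟩).isLeft = false) ?_).trans
          (((Equiv.subtypeSubtypeEquivSubtypeExists _ _).symm.trans
            ((E k).subtypeEquiv (fun w => Iff.rfl))).trans sumSubtypeLeftFalse)
        intro x
        constructor
        · rintro ⟨h1, h2⟩
          have hx := (hKiff x.1 k).mp h1
          exact ⟨hx, by rw [← hrS x k h1 hx]; exact h2⟩
        · rintro ⟨hx, hE2⟩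
          have h1 : K x.1 = k + 1 := (hKiff x.1 k).mpr hx
          exact ⟨h1, by rw [hrS x k h1 hx]; exact hE2⟩
      rw [Cardinal.mk_congr eqQ, mk_out']
      have eqY : {y : Σ n : ℕ, Quotient.out (m n) // q y = k + 1} ≃
          {y : Σ n : ℕ, Quotient.out (m n) // b (k + 1) < y.1 ∧ y.1 ≤ b (k + 2)} :=
        Equiv.subtypeEquivRight (fun y => by rw [hqdef]; exact hKbiff y.1 k)
      rw [Cardinal.mk_congr eqY, mk_slab_lt m hminf hmono_m (b (k + 1)) (b (k + 2)) (hblt (k + 1))]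
      exact Cardinal.add_eq_right (hminf _) (chain1 (k + 1))
  -- assemble the bijection
  set G : ∀ j : ℕ, {x : Σ n : ℕ, Quotient.out (l n) // p x = j} ≃
      {y : Σ n : ℕ, Quotient.out (m n) // q y = j} :=
    fun j => (Cardinal.eq.mp (hfib j)).some with hG
  set f := Equiv.ofFiberEquiv G with hf
  have hfq : ∀ x, q (f x) = p x := fun x => Equiv.ofFiberEquiv_map G x
  have hfp : ∀ y, p (f.symm y) = q y := by
    intro y
    have h := hfq (f.symm y)
    rw [Equiv.apply_symm_apply] at h
    exact h.symm
  refine ⟨f, ?_⟩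
  intro M
  refine ⟨max (b (K M + 1)) (a (Kb M + 2)), ?_, ?_⟩
  · intro x hx
    have h1 : K x.1 ≤ K M := (hKle x.1 (K M)).mpr (hx.trans ((hKle M (K M)).mp le_rfl))
    have h2 : q (f x) ≤ K M := (hfq x) ▸ ((hple x).trans h1)
    have h3 : Kb (f x).1 ≤ K M := by rw [hqdef] at h2; exact h2
    have h4 : (f x).1 ≤ b (K M + 1) := (hKble _ _).mp h3
    exact le_trans h4 (le_max_left _ _)
  · intro y hy
    have h1 : Kb y.1 ≤ Kb M := (hKble y.1 (Kb M)).mpr (hy.trans ((hKble M (Kb M)).mp le_rfl))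
    have h2 : p (f.symm y) ≤ Kb M := by
      rw [hfp y, hqdef]
      exact h1
    have h3 : K (f.symm y).1 ≤ Kb M + 1 := le_trans (hpge _) (by omega)
    have h4 : (f.symm y).1 ≤ a (Kb M + 2) := (hKle _ _).mp h3
    exact le_trans h4 (le_max_right _ _)


theorem cardSeqEquiv_of_sup (l m : ℕ → Cardinal) (κ : Cardinal)
    (hκ : Cardinal.aleph0 ≤ κ)
    (hlinf : ∀ n, Cardinal.aleph0 ≤ l n) (hminf : ∀ n, Cardinal.aleph0 ≤ m n)
    (hlmono : ∀ n : ℕ, 1 ≤ n → l n ≤ l (n + 1))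
    (hmmono : ∀ n : ℕ, 1 ≤ n → m n ≤ m (n + 1))
    (hlsup : κ = ⨆ n : ℕ, l (n + 1)) (hmsup : κ = ⨆ n : ℕ, m (n + 1))
    (hllt : ∀ n : ℕ, 1 ≤ n → l n < κ) (hmlt : ∀ n : ℕ, 1 ≤ n → m n < κ)
    (h0 : l 0 = m 0) :
    CardSeqEquiv l m := by
  exact cardSeqEquiv_of_sup' l m κ hκ hlinf hminf hlmono hmmono hlsup hmsup hllt hmlt h0
end

section
/- Let R₀ ⊇ R₁ ⊇ R₂ ⊇ ⋯ be a decreasing sequence of symmetric relations on ℕ with R₀ = ℕ × ℕ, and suppose that for each m, every infinite subset T ⊆ ℕ contains two distinct elements n, n' with (n, n') ∈ R_m. Then there exists a strictly increasing sequence n₁ < n₂ < n₃ < ⋯ such that (n_k, n_{k+1}) ∈ R_k for all k ≥ 1. -/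
/-!
A vertex of infinite degree exists in every infinite set `T`: otherwise, picking elements of `T`
greedily and discarding the finitely many neighbours of each pick yields an infinite set with no
related pair. Starting from `ℕ`, choose `n₀` with infinitely many `R₀`-neighbours above it, then
inside those choose `n₁` with infinitely many `R₁`-neighbours above it, and so on; every later
`n_k` lies among the neighbours of every earlier `n_j`.
-/

/-- Dependent choice along a decreasing sequence of infinite subsets of `S₀`. -/
theorem exists_strictMono_of_forall_exists_infinite {Q : ℕ → ℕ → ℕ → Prop} {S₀ : Set ℕ}
    (hS₀ : S₀.Infinite)
    (step : ∀ k (S : Set ℕ), S ⊆ S₀ → S.Infinite → ∃ e ∈ S, {x ∈ S | e < x ∧ Q k e x}.Infinite) :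
    ∃ x : ℕ → ℕ, StrictMono x ∧ (∀ k, x k ∈ S₀) ∧ ∀ j k, j < k → Q j (x j) (x k) := by
  choose! e he_mem he_inf using step
  let S : ℕ → Set ℕ := fun k =>
    Nat.rec S₀ (fun k S => {x ∈ S | e k S < x ∧ Q k (e k S) x}) k
  have hS_succ : ∀ k, S (k + 1) = {x ∈ S k | e k (S k) < x ∧ Q k (e k (S k)) x} := fun _ => rfl
  have hS_anti : Antitone S := antitone_nat_of_succ_le fun k => by
    rw [hS_succ]
    exact Set.sep_subset _ _
  have hS_inf : ∀ k, S k ⊆ S₀ ∧ (S k).Infinite := by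
    intro k
    induction k with
    | zero => exact ⟨subset_rfl, hS₀⟩
    | succ k ih => exact ⟨(hS_anti k.le_succ).trans ih.1, hS_succ k ▸ he_inf k _ ih.1 ih.2⟩
  have hx_mem : ∀ k, e k (S k) ∈ S k := fun k => he_mem k _ (hS_inf k).1 (hS_inf k).2
  have hx_later : ∀ j k, j < k → e j (S j) < e k (S k) ∧ Q j (e j (S j)) (e k (S k)) := by
    intro j k hjk
    have hk : e k (S k) ∈ S (j + 1) := hS_anti hjk (hx_mem k)
    rw [hS_succ] at hk
    exact hk.2
  exact ⟨fun k => e k (S k), fun j k hjk => (hx_later j k hjk).1,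
    fun k => (hS_inf k).1 (hx_mem k), fun j k hjk => (hx_later j k hjk).2⟩

theorem Set.Infinite.exists_infinite_neighbors_gt {R : ℕ → ℕ → Prop}
    (hsymm : ∀ a b, R a b → R b a)
    (hR : ∀ T : Set ℕ, T.Infinite → ∃ a ∈ T, ∃ b ∈ T, a ≠ b ∧ R a b) {T : Set ℕ}
    (hT : T.Infinite) : ∃ e ∈ T, {x ∈ T | e < x ∧ R e x}.Infinite := by
  by_contra! hfin
  have step : ∀ (_ : ℕ) (S : Set ℕ), S ⊆ T → S.Infinite →
      ∃ e ∈ S, {x ∈ S | e < x ∧ ¬R e x}.Infinite := by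
    intro _ S hST hS
    obtain ⟨e, he⟩ := hS.nonempty
    refine ⟨e, he, (hS.sdiff ((Set.finite_Iic e).union (hfin e (hST he)))).mono ?_⟩
    rintro x ⟨hx, hx_not⟩
    simp only [Set.mem_union, Set.mem_Iic, Set.mem_ofPred_eq, not_or, not_le] at hx_not
    exact ⟨hx, hx_not.1, fun hRx => hx_not.2 ⟨hST hx, hx_not.1, hRx⟩⟩
  obtain ⟨x, hx_mono, -, hx_indep⟩ := exists_strictMono_of_forall_exists_infinite hT step
  obtain ⟨_, ⟨j, rfl⟩, _, ⟨k, rfl⟩, hjk, hR_jk⟩ :=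
    hR _ (Set.infinite_range_of_injective hx_mono.injective)
  rcases lt_or_gt_of_ne (hx_mono.injective.ne_iff.mp hjk) with h | h
  · exact hx_indep j k h hR_jk
  · exact hx_indep k j h (hsymm _ _ hR_jk)

theorem nested_relations_increasing_chain_general (R : ℕ → ℕ → ℕ → Prop)
    (hsymm : ∀ m a b, R m a b → R m b a)
    (hram : ∀ m : ℕ, ∀ T : Set ℕ, T.Infinite →
      ∃ n ∈ T, ∃ n' ∈ T, n ≠ n' ∧ R m n n') :
    ∃ n : ℕ → ℕ, StrictMono n ∧ ∀ k : ℕ, 1 ≤ k → R k (n k) (n (k + 1)) := by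
  obtain ⟨n, hn_mono, -, hn_rel⟩ := exists_strictMono_of_forall_exists_infinite Set.infinite_univ
    fun k S _ hS => hS.exists_infinite_neighbors_gt (hsymm k) (hram k)
  exact ⟨n, hn_mono, fun k _ => hn_rel k (k + 1) k.lt_succ_self⟩

theorem nested_relations_increasing_chain (R : ℕ → ℕ → ℕ → Prop)
    (hsymm : ∀ m a b, R m a b → R m b a)
    (hdecr : ∀ m a b, R (m + 1) a b → R m a b)
    (h0 : ∀ a b, R 0 a b)
    (hram : ∀ m : ℕ, ∀ T : Set ℕ, T.Infinite →
      ∃ n ∈ T, ∃ n' ∈ T, n ≠ n' ∧ R m n n') :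
    ∃ n : ℕ → ℕ, StrictMono n ∧ ∀ k : ℕ, 1 ≤ k → R k (n k) (n (k + 1)) :=
  nested_relations_increasing_chain_general R hsymm hram
end

section
/- Let h : S × S → ℕ ∪ {∞} be a symmetric function on a countably infinite set S = {x_n : n ∈ ℕ}, and suppose there is no subsequence (n_k)_k with liminf_k h(x_{n_k}, x_{n_{k+1}}) = ∞. Then there exists an infinite set T ⊆ ℕ and m ∈ ℕ such that h(x_n, x_{n'}) ≤ m for all distinct n, n' ∈ T. -/
open Filter Set

open Classical in
/-- One step of the Ramsey construction. -/
private noncomputable def rstep (P : ℕ → ℕ → Prop) (S : Set ℕ) : Set ℕ :=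
  if ({b ∈ S | sInf S < b ∧ P (sInf S) b}).Infinite
  then {b ∈ S | sInf S < b ∧ P (sInf S) b}
  else {b ∈ S | sInf S < b ∧ ¬ P (sInf S) b}

private lemma rstep_subset (P : ℕ → ℕ → Prop) (S : Set ℕ) : rstep P S ⊆ S := by
  unfold rstep; split <;> exact fun b hb => hb.1

private lemma rstep_lt (P : ℕ → ℕ → Prop) (S : Set ℕ) :
    ∀ b ∈ rstep P S, sInf S < b := by
  unfold rstep; split <;> exact fun b hb => hb.2.1

private lemma rstep_infinite (P : ℕ → ℕ → Prop) {S : Set ℕ} (hS : S.Infinite) :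
    (rstep P S).Infinite := by
  have hbig : ({b ∈ S | sInf S < b}).Infinite := by
    have := hS.diff (Set.finite_Iic (sInf S))
    refine this.mono ?_
    intro b hb
    exact ⟨hb.1, by simpa [Set.mem_Iic] using hb.2⟩
  unfold rstep
  split
  · assumption
  · rename_i hfin
    have hsub : {b ∈ S | sInf S < b} \ {b ∈ S | sInf S < b ∧ P (sInf S) b}
        ⊆ {b ∈ S | sInf S < b ∧ ¬ P (sInf S) b} := by
      intro b hb
      exact ⟨hb.1.1, hb.1.2, fun hP => hb.2 ⟨hb.1.1, hb.1.2, hP⟩⟩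
    exact ((hbig.diff (Set.not_infinite.mp hfin)).mono hsub)

private lemma rstep_color (P : ℕ → ℕ → Prop) (S : Set ℕ) :
    (∀ b ∈ rstep P S, P (sInf S) b) ∨ (∀ b ∈ rstep P S, ¬ P (sInf S) b) := by
  unfold rstep
  split
  · exact Or.inl fun b hb => hb.2.2
  · exact Or.inr fun b hb => hb.2.2

/-- Infinite Ramsey theorem for pairs (two colours), on ordered pairs in ℕ. -/
private lemma ramsey_pairs (P : ℕ → ℕ → Prop) (T : Set ℕ) (hT : T.Infinite) :
    ∃ T' ⊆ T, T'.Infinite ∧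
      ((∀ a ∈ T', ∀ b ∈ T', a < b → P a b) ∨
       (∀ a ∈ T', ∀ b ∈ T', a < b → ¬ P a b)) := by
  set U : ℕ → Set ℕ := fun k => (rstep P)^[k] T with hU
  have hUsucc : ∀ k, U (k + 1) = rstep P (U k) := by
    intro k; simp [hU, Function.iterate_succ_apply']
  have hUinf : ∀ k, (U k).Infinite := by
    intro k; induction k with
    | zero => exact hT
    | succ k ih => rw [hUsucc]; exact rstep_infinite P ih
  have hUmono : ∀ k l, k ≤ l → U l ⊆ U k := by
    intro k l hkl
    induction l with
    | zero => simp_all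
    | succ l ih =>
      rcases Nat.lt_or_ge k (l + 1) with hc | hc
      · exact ((hUsucc l ▸ rstep_subset P (U l)).trans (ih (Nat.lt_succ_iff.mp hc)))
      · have : k = l + 1 := le_antisymm hkl hc
        subst this; exact subset_rfl
  set a : ℕ → ℕ := fun k => sInf (U k) with ha
  have haMem : ∀ k, a k ∈ U k := fun k => Nat.sInf_mem (hUinf k).nonempty
  have haLt : ∀ k, a k < a (k + 1) := by
    intro k
    have : a (k + 1) ∈ rstep P (U k) := by rw [← hUsucc]; exact haMem (k + 1)
    exact rstep_lt P (U k) _ this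
  have haSM : StrictMono a := strictMono_nat_of_lt_succ haLt
  set c : ℕ → Prop := fun k => ∀ b ∈ rstep P (U k), P (a k) b with hc
  have key : ∀ k l, k < l → ((c k → P (a k) (a l)) ∧ (¬ c k → ¬ P (a k) (a l))) := by
    intro k l hkl
    have hmem : a l ∈ rstep P (U k) := by
      rw [← hUsucc]; exact hUmono (k + 1) l hkl (haMem l)
    constructor
    · exact fun hck => hck _ hmem
    · intro hck hP
      rcases rstep_color P (U k) with hcol | hcol
      · exact hck hcol
      · exact hcol _ hmem hP
  by_cases hK : {k | c k}.Infinite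
  · refine ⟨a '' {k | c k}, ?_, hK.image (haSM.injective.injOn), Or.inl ?_⟩
    · rintro _ ⟨k, _, rfl⟩; exact hUmono 0 k (Nat.zero_le k) (haMem k)
    · rintro _ ⟨k, hk, rfl⟩ _ ⟨l, _, rfl⟩ hlt
      exact (key k l (haSM.lt_iff_lt.mp hlt)).1 hk
  · have hKc : {k | ¬ c k}.Infinite := by
      rw [Set.not_infinite] at hK
      have := (Set.infinite_univ (α := ℕ)).diff hK
      refine this.mono ?_; intro k hk; exact hk.2
    refine ⟨a '' {k | ¬ c k}, ?_, hKc.image (haSM.injective.injOn), Or.inr ?_⟩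
    · rintro _ ⟨k, _, rfl⟩; exact hUmono 0 k (Nat.zero_le k) (haMem k)
    · rintro _ ⟨k, hk, rfl⟩ _ ⟨l, _, rfl⟩ hlt
      exact (key k l (haSM.lt_iff_lt.mp hlt)).2 hk

open Filter in
theorem bounded_on_infinite_set_of_no_liminf_top {S : Type*} (x : ℕ → S)
    (hx : Function.Bijective x) (h : S → S → ℕ∞)
    (hsymm : ∀ a b, h a b = h b a)
    (hno : ¬ ∃ n : ℕ → ℕ, StrictMono n ∧
      liminf (fun k => h (x (n k)) (x (n (k + 1)))) atTop = ⊤) :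
    ∃ T : Set ℕ, T.Infinite ∧ ∃ m : ℕ, ∀ a ∈ T, ∀ b ∈ T, a ≠ b →
      h (x a) (x b) ≤ (m : ℕ∞) := by
  by_contra hcon
  push_neg at hcon
  -- From every infinite set and every bound m, extract an infinite subset
  -- on which h exceeds m on all pairs.
  have key : ∀ (W : Set ℕ) (m : ℕ), ∃ W', W.Infinite →
      (W' ⊆ W ∧ W'.Infinite ∧ ∀ a ∈ W', ∀ b ∈ W', a < b → ¬ h (x a) (x b) ≤ (m : ℕ∞)) := by
    intro W m
    by_cases hW : W.Infinite
    · obtain ⟨W', hsub, hinf, hcol⟩ := ramsey_pairs (fun a b => h (x a) (x b) ≤ (m : ℕ∞)) W hW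
      rcases hcol with hgood | hbad
      · exfalso
        obtain ⟨a, ha, b, hb, hab, hgt⟩ := hcon W' hinf m
        rcases Nat.lt_or_ge a b with hlt | hge
        · exact absurd hgt (not_lt.mpr (hgood a ha b hb hlt))
        · have hlt : b < a := lt_of_le_of_ne hge (Ne.symm hab)
          exact absurd hgt (not_lt.mpr (by rw [hsymm]; exact hgood b hb a ha hlt))
      · exact ⟨W', fun _ => ⟨hsub, hinf, hbad⟩⟩
    · exact ⟨∅, fun hW' => absurd hW' hW⟩
  choose f hf using key
  -- Nested infinite sets V m with h > m on all pairs of V m.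
  set V : ℕ → Set ℕ := fun m => Nat.rec (f Set.univ 0) (fun m Vm => f Vm (m + 1)) m with hV
  have hV0 : V 0 = f Set.univ 0 := rfl
  have hVsucc : ∀ m, V (m + 1) = f (V m) (m + 1) := fun m => rfl
  have hVprop : ∀ m, (V m).Infinite ∧
      ∀ a ∈ V m, ∀ b ∈ V m, a < b → ¬ h (x a) (x b) ≤ (m : ℕ∞) := by
    intro m
    induction m with
    | zero =>
      have := hf Set.univ 0 Set.infinite_univ
      exact ⟨this.2.1, this.2.2⟩
    | succ m ih =>
      have := hf (V m) (m + 1) ih.1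
      exact ⟨this.2.1, this.2.2⟩
  have hVsub : ∀ m, V (m + 1) ⊆ V m := fun m => (hf (V m) (m + 1) (hVprop m).1).1
  -- Choose a strictly increasing sequence n with n k ∈ V k.
  set n : ℕ → ℕ := fun k => Nat.rec (sInf (V 0)) (fun k nk => sInf {b ∈ V (k + 1) | nk < b}) k
    with hn
  have hstep : ∀ k, n (k + 1) ∈ V (k + 1) ∧ n k < n (k + 1) := by
    intro k
    have hne : ({b ∈ V (k + 1) | n k < b}).Nonempty := by
      have : ({b ∈ V (k + 1) | n k < b}).Infinite := by
        refine ((hVprop (k + 1)).1.diff (Set.finite_Iic (n k))).mono ?_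
        intro b hb; exact ⟨hb.1, by simpa [Set.mem_Iic] using hb.2⟩
      exact this.nonempty
    have : n (k + 1) ∈ {b ∈ V (k + 1) | n k < b} := Nat.sInf_mem hne
    exact ⟨this.1, this.2⟩
  have hnmem : ∀ k, n k ∈ V k := by
    intro k
    cases k with
    | zero => exact Nat.sInf_mem (hVprop 0).1.nonempty
    | succ k => exact (hstep k).1
  have hnSM : StrictMono n := strictMono_nat_of_lt_succ fun k => (hstep k).2
  refine hno ⟨n, hnSM, ?_⟩
  -- The liminf of consecutive values is ⊤.
  have hbig : ∀ k : ℕ, (k : ℕ∞) < h (x (n k)) (x (n (k + 1)))  := by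
    intro k
    have h1 : n (k + 1) ∈ V k := hVsub k (hnmem (k + 1))
    have := (hVprop k).2 (n k) (hnmem k) (n (k + 1)) h1 (hstep k).2
    exact lt_of_not_ge this
  rw [liminf_eq]
  rw [eq_top_iff]
  by_contra htop
  have hlt : sSup {a | ∀ᶠ (k : ℕ) in atTop, a ≤ h (x (n k)) (x (n (k + 1)))} ≠ ⊤ := by
    intro hc; exact htop (hc ▸ le_rfl)
  obtain ⟨m, hm⟩ := WithTop.ne_top_iff_exists.mp hlt
  have : (m + 1 : ℕ∞) ≤ sSup {a | ∀ᶠ (k : ℕ) in atTop, a ≤ h (x (n k)) (x (n (k + 1)))} := by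
    refine le_sSup ?_
    simp only [Set.mem_setOf_eq, eventually_atTop]
    refine ⟨m, fun k hk => ?_⟩
    calc (m + 1 : ℕ∞) ≤ (k + 1 : ℕ) := by exact_mod_cast Nat.succ_le_succ hk
    _ ≤ h (x (n k)) (x (n (k + 1))) := by
        exact_mod_cast Order.add_one_le_of_lt (hbig k)
  rw [← hm] at this
  rw [show ((m : ℕ∞) + 1) = ((m + 1 : ℕ) : ℕ∞) by push_cast; ring] at this
  exact absurd this (not_le.mpr (ENat.coe_lt_coe.mpr (Nat.lt_succ_self m)))
end

section
/- Let X be a path-connected, locally path-connected topological space, (m_k)_k a convergent sequence in X with limit m, and ρ : [0,1] → X defined by choosing paths ρ_k : [1 - 1/(k+1), 1 - 1/(k+2)] → X from m_k to m_{k+1} such that for every neighborhood U of m all but finitely many ρ_k have image in U, with ρ(1) = m. Then ρ is continuous, i.e., the infinite concatenation of the paths ρ_k together with the endpoint m is a path from m₀ to m. -/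
/-!
On `[0, 1)` the map `ρ` is, near any point, a finite concatenation of the paths `ρ_k`, which is
continuous by pasting along the closed intervals `[1 - 1/(k+1), 1 - 1/(k+2)]`; consecutive pieces
agree at the junctions because `ρ_k` ends where `ρ_{k+1}` starts. At `1`, a neighbourhood `U` of
`m` contains the images of all `ρ_k` with `k ≥ N`, and these images cover `ρ` of the whole final
segment `[1 - 1/(N+1), 1)`.
-/

open Filter Set Topology unitInterval

theorem continuousOn_Iic_of_continuousOn_Icc_succ {α X : Type*} [LinearOrder α]
    [TopologicalSpace α] [OrderClosedTopology α] [TopologicalSpace X] {a : ℕ → α}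
    (ha : Monotone a) {f : α → X} (h₀ : ContinuousOn f (Iic (a 0)))
    (h : ∀ k, ContinuousOn f (Icc (a k) (a (k + 1)))) (n : ℕ) :
    ContinuousOn f (Iic (a n)) := by
  induction n with
  | zero => exact h₀
  | succ n ih =>
    rw [← Iic_union_Icc_eq_Iic (ha n.le_succ)]
    exact ih.union_of_isClosed (h n) isClosed_Iic isClosed_Icc

theorem exists_le_and_lt_succ {α : Type*} [LinearOrder α] {a : ℕ → α} {x : α}
    (h₀ : a 0 ≤ x) (h : ∃ n, x < a n) : ∃ k, a k ≤ x ∧ x < a (k + 1) := by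
  obtain ⟨n, hn⟩ := h
  by_contra! H
  have hle : ∀ k, a k ≤ x := fun k => Nat.rec h₀ (fun k hk => H k hk) k
  exact (hle n).not_gt hn

noncomputable def concatKnot (k : ℕ) : I :=
  ⟨1 - 1 / ((k : ℝ) + 1),
    Icc.mem_iff_one_sub_mem.mp (div_mem zero_le_one (by positivity) (by simp))⟩

theorem coe_concatKnot_succ (k : ℕ) : (concatKnot (k + 1) : ℝ) = 1 - 1 / ((k : ℝ) + 2) := by
  simp only [concatKnot]; push_cast; ring_nf

theorem concatKnot_zero : concatKnot 0 = 0 := by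
  ext; simp [concatKnot]

theorem concatKnot_strictMono : StrictMono concatKnot := by
  refine strictMono_nat_of_lt_succ fun k => ?_
  change (1 - 1 / ((k : ℝ) + 1)) < concatKnot (k + 1)
  rw [coe_concatKnot_succ]
  gcongr 1 - 1 / ?_
  linarith

theorem tendsto_concatKnot : Tendsto concatKnot atTop (𝓝 1) := by
  rw [tendsto_subtype_rng]
  have := tendsto_one_div_add_atTop_nhds_zero_nat.const_sub (1 : ℝ)
  rw [sub_zero] at this
  exact this

theorem concatKnot_lt_one (k : ℕ) : concatKnot k < 1 :=
  show (1 - 1 / ((k : ℝ) + 1)) < 1 by linarith [show 0 < 1 / ((k : ℝ) + 1) by positivity]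

theorem concatKnot_succ_sub_mul (k : ℕ) :
    ((concatKnot (k + 1) : ℝ) - concatKnot k) * ((k : ℝ) + 1) * ((k : ℝ) + 2) = 1 := by
  rw [coe_concatKnot_succ]
  simp only [concatKnot]
  field_simp
  ring

theorem exists_concatKnot_le_and_lt {t : I} (ht : t < 1) :
    ∃ k, concatKnot k ≤ t ∧ t < concatKnot (k + 1) :=
  exists_le_and_lt_succ (concatKnot_zero ▸ nonneg')
    (tendsto_concatKnot.eventually (eventually_gt_nhds ht)).exists

section InfiniteConcatenation

variable {X : Type*} [TopologicalSpace X] {x : ℕ → X}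

/-- `γ k` reparametrised affinely so that it runs over `[concatKnot k, concatKnot (k + 1)]`. -/
noncomputable def concatPiece (γ : ∀ k, Path (x k) (x (k + 1))) (k : ℕ) (t : I) : X :=
  (γ k).extend (((t : ℝ) - concatKnot k) * ((k : ℝ) + 1) * ((k : ℝ) + 2))

variable {γ : ∀ k, Path (x k) (x (k + 1))} {ρ : I → X}

theorem continuous_concatPiece (k : ℕ) : Continuous (concatPiece γ k) :=
  (γ k).continuous_extend.comp (by fun_prop)

theorem concatPiece_concatKnot (k : ℕ) : concatPiece γ k (concatKnot k) = x k := by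
  simp [concatPiece]

theorem concatPiece_concatKnot_succ (k : ℕ) :
    concatPiece γ k (concatKnot (k + 1)) = x (k + 1) := by
  simp only [concatPiece, concatKnot_succ_sub_mul, Path.extend_one]

theorem concatPiece_mem_range (k : ℕ) (t : I) : concatPiece γ k t ∈ range (γ k) :=
  ⟨_, rfl⟩

variable
  (hρ : ∀ k t, concatKnot k ≤ t → t < concatKnot (k + 1) → ρ t = concatPiece γ k t)
include hρ

theorem eqOn_concatPiece (k : ℕ) :
    EqOn ρ (concatPiece γ k) (Icc (concatKnot k) (concatKnot (k + 1))) := by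
  rintro t ⟨hkt, htk⟩
  rcases htk.lt_or_eq with htk | rfl
  · exact hρ k t hkt htk
  · rw [hρ (k + 1) _ le_rfl (concatKnot_strictMono k.succ.lt_succ_self),
      concatPiece_concatKnot, concatPiece_concatKnot_succ]

theorem continuousOn_Iic_concatKnot (n : ℕ) : ContinuousOn ρ (Iic (concatKnot n)) := by
  refine continuousOn_Iic_of_continuousOn_Icc_succ concatKnot_strictMono.monotone ?_
    (fun k => (continuous_concatPiece k).continuousOn.congr (eqOn_concatPiece hρ k)) n
  rw [concatKnot_zero]
  exact (Iic_bot (α := I)).symm ▸ continuousOn_singleton ρ ⊥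

theorem continuousAt_of_lt_one {t : I} (ht : t < 1) : ContinuousAt ρ t := by
  obtain ⟨n, hn⟩ := (tendsto_concatKnot.eventually (eventually_gt_nhds ht)).exists
  exact (continuousOn_Iic_concatKnot hρ n).continuousAt (Iic_mem_nhds hn)

theorem continuousAt_one {m : X} (hU : ∀ U ∈ 𝓝 m, ∀ᶠ k in atTop, range (γ k) ⊆ U)
    (hρ1 : ρ 1 = m) : ContinuousAt ρ 1 := by
  rw [ContinuousAt, hρ1]
  intro U hUm
  rw [mem_map]
  obtain ⟨N, hN⟩ := (hU U hUm).exists_forall_of_atTop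
  filter_upwards [Ici_mem_nhds (concatKnot_lt_one N)] with t hNt
  rcases (le_one' (t := t)).lt_or_eq with ht | rfl
  · obtain ⟨k, hkt, htk⟩ := exists_concatKnot_le_and_lt ht
    have hNk : N ≤ k :=
      Nat.lt_succ_iff.mp (concatKnot_strictMono.lt_iff_lt.mp (hNt.trans_lt htk))
    rw [mem_preimage, hρ k t hkt htk]
    exact hN k hNk (concatPiece_mem_range k t)
  · rw [mem_preimage, hρ1]
    exact mem_of_mem_nhds hUm

end InfiniteConcatenation

open Filter in
theorem infinite_concatenation_continuous_general {X : Type*} [TopologicalSpace X]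
    (mseq : ℕ → X) (m : X)
    (ρseq : ∀ k : ℕ, Path (mseq k) (mseq (k + 1)))
    (hU : ∀ U ∈ nhds m, ∀ᶠ k in atTop, Set.range (ρseq k) ⊆ U)
    (ρ : unitInterval → X)
    (hρ : ∀ k : ℕ, ∀ t : unitInterval,
      1 - 1 / ((k : ℝ) + 1) ≤ (t : ℝ) → (t : ℝ) < 1 - 1 / ((k : ℝ) + 2) →
      ρ t = (ρseq k).extend
        (((t : ℝ) - (1 - 1 / ((k : ℝ) + 1))) * ((k : ℝ) + 1) * ((k : ℝ) + 2)))
    (hρ1 : ρ 1 = m) :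
    Continuous ρ ∧ ρ 0 = mseq 0 ∧ ρ 1 = m := by
  have hρ' : ∀ k t, concatKnot k ≤ t → t < concatKnot (k + 1) →
      ρ t = concatPiece ρseq k t :=
    fun k t hkt htk => hρ k t hkt (coe_concatKnot_succ k ▸ htk)
  refine ⟨continuous_iff_continuousAt.mpr fun t => ?_, ?_, hρ1⟩
  · rcases (le_one' (t := t)).lt_or_eq with ht | rfl
    · exact continuousAt_of_lt_one hρ' ht
    · exact continuousAt_one hρ' hU hρ1
  · rw [← concatKnot_zero, hρ' 0 _ le_rfl (concatKnot_strictMono zero_lt_one),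
      concatPiece_concatKnot]

open Filter in
theorem infinite_concatenation_continuous {X : Type*} [TopologicalSpace X]
    [PathConnectedSpace X] [LocallyPathConnectedSpace X]
    (mseq : ℕ → X) (m : X) (hm : Tendsto mseq atTop (nhds m))
    (ρseq : ∀ k : ℕ, Path (mseq k) (mseq (k + 1)))
    (hU : ∀ U ∈ nhds m, ∀ᶠ k in atTop, Set.range (ρseq k) ⊆ U)
    (ρ : unitInterval → X)
    (hρ : ∀ k : ℕ, ∀ t : unitInterval,
      1 - 1 / ((k : ℝ) + 1) ≤ (t : ℝ) → (t : ℝ) < 1 - 1 / ((k : ℝ) + 2) →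
      ρ t = (ρseq k).extend
        (((t : ℝ) - (1 - 1 / ((k : ℝ) + 1))) * ((k : ℝ) + 1) * ((k : ℝ) + 2)))
    (hρ1 : ρ 1 = m) :
    Continuous ρ ∧ ρ 0 = mseq 0 ∧ ρ 1 = m :=
  infinite_concatenation_continuous_general mseq m ρseq hU ρ hρ hρ1
end
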